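/- arXiv:2201.04284 — 5 statements merged into one kernel-verified Lean document; each statement's English description precedes it below -/
import Mathlib

section
/- Let t_0, t_1, ..., t_n be n+1 integers with 1 = t_0 < t_1 < ... < t_n, and let Δ = max_{1 ≤ s ≤ n} (t_s - t_0)/s. Then for arbitrary real numbers a_0 ≥ a_1 ≥ ... ≥ a_{n-1} ≥ 1, one has ∑_{i=0}^{n-1} (t_{i+1} - t_i) · log a_i ≤ Δ · ∑_{i=0}^{n-1} log a_i. -/
open Finset

lemma abel_aux (Δ : ℝ) (f g : ℕ → ℝ) (hg : Antitone g)
    (hF : ∀ m : ℕ, (∑ i ∈ range m, f i) ≤ Δ * m) :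
    ∀ m : ℕ, ∑ i ∈ range m, (f i - Δ) * g i ≤ ((∑ i ∈ range m, f i) - Δ * m) * g m := by
  intro m
  induction m with
  | zero => simp
  | succ m ih =>
    rw [Finset.sum_range_succ, Finset.sum_range_succ]
    have hc : (∑ i ∈ range m, f i) + f m - Δ * (m + 1) ≤ 0 := by
      have := hF (m + 1)
      rw [Finset.sum_range_succ] at this
      push_cast at this ⊢
      linarith
    have h2 : ((∑ i ∈ range m, f i) + f m - Δ * (m + 1)) * g m
        ≤ ((∑ i ∈ range m, f i) + f m - Δ * (m + 1)) * g (m + 1) :=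
      mul_le_mul_of_nonpos_left (hg (Nat.le_succ m)) hc
    push_cast
    nlinarith [ih]

/-- Lemma 3.1 of Quang, reformulated.
Let `t 0 = 1 < t 1 < … < t n` be integers and
`Δ = max_{1 ≤ s ≤ n} (t s - t 0)/s`.  Then for reals
`a 0 ≥ a 1 ≥ … ≥ a (n-1) ≥ 1` we have
`∑ (t (i+1) - t i) * log (a i) ≤ Δ * ∑ log (a i)`. -/
theorem stmt_0 (n : ℕ) (hn : 1 ≤ n) (t : Fin (n + 1) → ℤ)
    (ht : StrictMono t) (ht0 : t 0 = 1) (Δ : ℝ)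
    (hΔ : Δ = Finset.univ.sup' ⟨⟨0, hn⟩, Finset.mem_univ _⟩
      (fun s : Fin n => ((t s.succ : ℝ) - (t 0 : ℝ)) / (s.1 + 1)))
    (a : Fin n → ℝ) (ha : Antitone a) (ha1 : ∀ i, 1 ≤ a i) :
    ∑ i : Fin n, ((t i.succ : ℝ) - (t i.castSucc : ℝ)) * Real.log (a i)
      ≤ Δ * ∑ i : Fin n, Real.log (a i) := by
  -- extended sequences on ℕ
  set T : ℕ → ℝ := fun i => ((t ⟨min i n, by omega⟩ : ℤ) : ℝ) with hTdef
  set f : ℕ → ℝ := fun i => T (i + 1) - T i with hfdef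
  set g : ℕ → ℝ := fun i => Real.log (a ⟨min i (n - 1), by omega⟩) with hgdef
  have hganti : Antitone g := by
    intro i j hij
    apply Real.log_le_log (lt_of_lt_of_le one_pos (ha1 _))
    exact ha (by simp [Fin.mk_le_mk]; omega)
  have hg0 : ∀ i, 0 ≤ g i := fun i => Real.log_nonneg (ha1 _)
  -- Δ is nonnegative (indeed ≥ 1)
  have hΔ0 : 0 ≤ Δ := by
    rw [hΔ]
    have h1 : ((t (⟨0, hn⟩ : Fin n).succ : ℝ) - (t 0 : ℝ)) / ((0 : ℕ) + 1) ≤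
        Finset.univ.sup' ⟨⟨0, hn⟩, Finset.mem_univ _⟩
          (fun s : Fin n => ((t s.succ : ℝ) - (t 0 : ℝ)) / (s.1 + 1)) :=
      Finset.le_sup' (fun s : Fin n => ((t s.succ : ℝ) - (t 0 : ℝ)) / (s.1 + 1))
        (Finset.mem_univ ⟨0, hn⟩)
    have h2 : t 0 < t (⟨0, hn⟩ : Fin n).succ := ht (by simp [Fin.lt_def])
    have h2' : ((t 0 : ℝ)) < (t (⟨0, hn⟩ : Fin n).succ : ℝ) := by exact_mod_cast h2
    have : (0 : ℝ) ≤ ((t (⟨0, hn⟩ : Fin n).succ : ℝ) - (t 0 : ℝ)) / ((0 : ℕ) + 1) := by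
      apply div_nonneg <;> [linarith; norm_num]
    linarith
  -- key bound on partial sums
  have hTsum : ∀ m : ℕ, ∑ i ∈ range m, f i = T m - T 0 := fun m => Finset.sum_range_sub T m
  have hT0 : T 0 = 1 := by
    have : (⟨min 0 n, by omega⟩ : Fin (n + 1)) = 0 := by ext; simp
    simp [hTdef, this, ht0]
  have hF : ∀ m : ℕ, (∑ i ∈ range m, f i) ≤ Δ * m := by
    intro m
    rcases Nat.eq_zero_or_pos m with hm | hm
    · subst hm; simp
    rw [hTsum m, hT0]
    · set k := min m n with hk
      have hk1 : 1 ≤ k := by omega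
      have hkn : k ≤ n := by omega
      have hle : ((t (⟨k - 1, by omega⟩ : Fin n).succ : ℝ) - (t 0 : ℝ)) / ((k - 1 : ℕ) + 1)
          ≤ Δ := by
        rw [hΔ]
        exact Finset.le_sup' (fun s : Fin n => ((t s.succ : ℝ) - (t 0 : ℝ)) / (s.1 + 1))
          (Finset.mem_univ ⟨k - 1, by omega⟩)
      have hsucc : (⟨k - 1, by omega⟩ : Fin n).succ = (⟨k, by omega⟩ : Fin (n + 1)) := by
        ext; simp; try omega
      rw [hsucc, ht0] at hle
      have hkpos : (0 : ℝ) < ((k - 1 : ℕ) : ℝ) + 1 := by positivity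
      rw [div_le_iff₀ hkpos] at hle
      have hcast : ((k - 1 : ℕ) : ℝ) + 1 = (k : ℝ) := by
        have : k - 1 + 1 = k := by omega
        exact_mod_cast congrArg (Nat.cast : ℕ → ℝ) this
      rw [hcast] at hle
      have hTm : T m = ((t (⟨k, by omega⟩ : Fin (n + 1)) : ℤ) : ℝ) := rfl
      push_cast at hle ⊢
      rw [hTm]
      have hmk : (k : ℝ) ≤ (m : ℝ) := by exact_mod_cast Nat.min_le_left m n
      nlinarith
  have key := abel_aux Δ f g hganti hF n
  -- RHS of key is ≤ 0
  have hrhs : ((∑ i ∈ range n, f i) - Δ * n) * g n ≤ 0 :=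
    mul_nonpos_of_nonpos_of_nonneg (by linarith [hF n]) (hg0 n)
  have hmain : ∑ i ∈ range n, f i * g i ≤ Δ * ∑ i ∈ range n, g i := by
    have := key.trans hrhs
    have expand : ∀ i, (f i - Δ) * g i = f i * g i - Δ * g i := fun i => by ring
    simp_rw [expand] at this
    rw [Finset.sum_sub_distrib, ← Finset.mul_sum] at this
    linarith
  -- convert Fin sums to range sums
  have e1 : ∑ i : Fin n, ((t i.succ : ℝ) - (t i.castSucc : ℝ)) * Real.log (a i)
      = ∑ i ∈ range n, f i * g i := by
    rw [Finset.sum_range fun i => f i * g i]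
    apply Finset.sum_congr rfl
    intro i _
    have h1 : T (i.1 + 1) = ((t i.succ : ℤ) : ℝ) := by
      simp only [hTdef]
      congr 1
      · congr 1; ext; simp; try omega
    have h2 : T i.1 = ((t i.castSucc : ℤ) : ℝ) := by
      simp only [hTdef]
      congr 1
      · congr 1; ext; simp; try omega
    have h3 : g i.1 = Real.log (a i) := by
      simp only [hgdef]
      congr 1
      · congr 1; ext; simp; try omega
    rw [hfdef]
    simp only [h1, h2, h3]
  have e2 : ∑ i : Fin n, Real.log (a i) = ∑ i ∈ range n, g i := by
    rw [Finset.sum_range fun i => g i]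
    apply Finset.sum_congr rfl
    intro i _
    simp only [hgdef]
    congr 1
    · congr 1; ext; simp; try omega
  rw [e1, e2]
  exact hmain
end

section
/- If Cartier divisors D_1, ..., D_q on a projective variety X of dimension n are in ℓ-subgeneral position with index κ (ℓ ≥ n ≥ κ ≥ 1), then they are in (1, 2, ..., κ-1, ℓ-n+κ, ℓ-n+κ+1, ..., ℓ)-subgeneral position with respect to X. -/
private lemma cancel_aux (a : WithBot ℕ∞) (c d m : ℕ)
    (h : a + ((c + d : ℕ) : WithBot ℕ∞) ≤ ((c + m : ℕ) : WithBot ℕ∞)) :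
    a + (d : WithBot ℕ∞) ≤ (m : WithBot ℕ∞) := by
  induction a using WithBot.recBotCoe with
  | bot => simp
  | coe e =>
    induction e using ENat.recTopCoe with
    | top =>
      exfalso
      rw [show ((c + d : ℕ) : WithBot ℕ∞) = (((c + d : ℕ) : ℕ∞) : WithBot ℕ∞) by norm_cast,
        show ((c + m : ℕ) : WithBot ℕ∞) = (((c + m : ℕ) : ℕ∞) : WithBot ℕ∞) by norm_cast,
        ← WithBot.coe_add] at h
      have h2 := WithBot.coe_le_coe.mp h
      rw [top_add] at h2
      exact (ENat.coe_ne_top (c + m)) (top_le_iff.mp h2)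
    | coe k =>
      have h' : k + (c + d) ≤ c + m := by exact_mod_cast h
      have : k + d ≤ m := by omega
      exact_mod_cast this

/-- Remark 3.3(ii). If Cartier divisors `D 1, …, D q`
(recorded through their supports, closed subsets of `X`) on a projective
variety `X` of dimension `n` are in `ℓ`-subgeneral position with index `κ`
(`ℓ ≥ n ≥ κ ≥ 1`), then they are in
`(1, 2, …, κ-1, ℓ-n+κ, ℓ-n+κ+1, …, ℓ)`-subgeneral position: for every
`1 ≤ s ≤ n`, any `t s + 1` of them (where `t s = s` for `s < κ` and
`t s = ℓ - n + s` for `s ≥ κ`) have support intersection of dimension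
`≤ n - s - 1`.

Dimension inequalities `dim S ≤ b - c` are encoded as
`dim S + c ≤ b` in `WithBot ℕ∞` (with `dim ∅ = ⊥`). -/
theorem stmt_8 (X : Type*) [TopologicalSpace X] [IrreducibleSpace X]
    (n ℓ κ q : ℕ) (hκ : 1 ≤ κ) (hκn : κ ≤ n) (hnℓ : n ≤ ℓ)
    (hX : topologicalKrullDim X = (n : WithBot ℕ∞))
    (D : Fin q → Set X) (hDcl : ∀ i, IsClosed (D i))
    (hsub : ∀ I : Finset (Fin q), I.card ≤ ℓ + 1 →
      topologicalKrullDim ↥(⋂ i ∈ I, D i) + (I.card : WithBot ℕ∞)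
        ≤ (ℓ : WithBot ℕ∞))
    (hind : ∀ I : Finset (Fin q), I.card ≤ κ →
      topologicalKrullDim ↥(⋂ i ∈ I, D i) + (I.card : WithBot ℕ∞)
        ≤ (n : WithBot ℕ∞)) :
    ∀ s : ℕ, 1 ≤ s → s ≤ n →
      ∀ I : Finset (Fin q), I.card = (if s < κ then s else ℓ - n + s) + 1 →
        topologicalKrullDim ↥(⋂ i ∈ I, D i) + ((s : WithBot ℕ∞) + 1)
          ≤ (n : WithBot ℕ∞) := by
  intro s hs1 hsn I hI
  split_ifs at hI with h
  · have h1 := hind I (by omega)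
    rw [hI] at h1
    calc topologicalKrullDim ↥(⋂ i ∈ I, D i) + ((s : WithBot ℕ∞) + 1)
        = topologicalKrullDim ↥(⋂ i ∈ I, D i) + ((s + 1 : ℕ) : WithBot ℕ∞) := by push_cast; ring
      _ ≤ (n : WithBot ℕ∞) := h1
  · have h1 := hsub I (by omega)
    rw [hI] at h1
    have h2 : topologicalKrullDim ↥(⋂ i ∈ I, D i) + (((ℓ - n) + (s + 1) : ℕ) : WithBot ℕ∞)
        ≤ (((ℓ - n) + n : ℕ) : WithBot ℕ∞) := by
      rw [show (ℓ - n) + (s + 1) = ℓ - n + s + 1 by omega, show ℓ - n + n = ℓ by omega]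
      exact h1
    have h3 := cancel_aux _ (ℓ - n) (s + 1) n h2
    calc topologicalKrullDim ↥(⋂ i ∈ I, D i) + ((s : WithBot ℕ∞) + 1)
        = topologicalKrullDim ↥(⋂ i ∈ I, D i) + ((s + 1 : ℕ) : WithBot ℕ∞) := by push_cast; ring
      _ ≤ (n : WithBot ℕ∞) := h3
end

section
/- If Cartier divisors D_1, ..., D_q on a projective variety X of dimension n are in (t_1, ..., t_n)-subgeneral position with 0 = t_0 < t_1 < ... < t_n, then their distributive constant Δ satisfies Δ ≤ max_{1 ≤ k ≤ n} t_k / k. -/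
lemma dim_mono_aux {X : Type*} [TopologicalSpace X] {A B : Set X}
    (hA : IsClosed A) (h : A ⊆ B) :
    topologicalKrullDim ↥A ≤ topologicalKrullDim ↥B := by
  exact (Topology.IsEmbedding.inclusion h).isInducing.topologicalKrullDim_le

/-- If Cartier divisors `D 1, …, D q` (recorded through their
supports, closed subsets of `X`) on a projective variety `X` of dimension `n`
are in `(t 1, …, t n)`-subgeneral position with `0 = t 0 < t 1 < … < t n`,
then their distributive constant
`Δ = max_{Γ ≠ ∅} #Γ / (n - dim (⋂_{j ∈ Γ} Supp (D j)))` (with `dim ∅ = -∞`)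
satisfies `Δ ≤ max_{1 ≤ k ≤ n} (t k)/k`; equivalently, every nonempty `Γ`
whose intersection is nonempty of dimension `d` satisfies
`#Γ/(n - d) ≤ max_{1 ≤ k ≤ n} (t k)/k`. -/
theorem stmt_9 (X : Type*) [TopologicalSpace X] [IrreducibleSpace X]
    (n q : ℕ) (hn : 1 ≤ n) (hq : 1 ≤ q)
    (hX : topologicalKrullDim X = (n : WithBot ℕ∞))
    (t : ℕ → ℕ) (ht0 : t 0 = 0)
    (htmono : ∀ s s' : ℕ, s < s' → s' ≤ n → t s < t s')
    (D : Fin q → Set X) (hDcl : ∀ i, IsClosed (D i))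
    -- `(t 1, …, t n)`-subgeneral position
    (hpos : ∀ s : ℕ, 1 ≤ s → s ≤ n →
      ∀ I : Finset (Fin q), I.card = t s + 1 →
        topologicalKrullDim ↥(⋂ i ∈ I, D i) + ((s : WithBot ℕ∞) + 1)
          ≤ (n : WithBot ℕ∞)) :
    ∀ Γ : Finset (Fin q), Γ.Nonempty → ∀ d : ℕ,
      topologicalKrullDim ↥(⋂ i ∈ Γ, D i) = (d : WithBot ℕ∞) →
        (Γ.card : ℝ) / ((n : ℝ) - d)
          ≤ (Finset.Icc 1 n).sup' ⟨1, Finset.mem_Icc.mpr ⟨le_refl 1, hn⟩⟩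
              (fun k : ℕ => (t k : ℝ) / k) := by
  intro Γ hΓ d hd
  have hclΓ : IsClosed (⋂ i ∈ Γ, D i) := isClosed_biInter fun i _ => hDcl i
  -- d ≤ n
  have hdn : d ≤ n := by
    have h1 : topologicalKrullDim ↥(⋂ i ∈ Γ, D i) ≤ topologicalKrullDim X := by
      have := dim_mono_aux (X := X) hclΓ (Set.subset_univ _)
      refine this.trans ?_
      exact le_of_eq (IsHomeomorph.topologicalKrullDim_eq _
        (Homeomorph.Set.univ X).isHomeomorph)
    rw [hd, hX] at h1
    exact_mod_cast h1
  rcases eq_or_lt_of_le hdn with heq | hlt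
  · -- degenerate case d = n : LHS is m / 0 = 0
    have : ((n : ℝ) - d) = 0 := by rw [heq]; ring
    rw [this, div_zero]
    refine le_trans ?_ (Finset.le_sup' _ (Finset.mem_Icc.mpr ⟨le_refl 1, hn⟩))
    positivity
  · -- main case: set s = n - d
    set s := n - d with hs
    have hs1 : 1 ≤ s := by omega
    have hsn : s ≤ n := by omega
    -- claim: Γ.card ≤ t s
    have hcard : Γ.card ≤ t s := by
      by_contra hcon
      push_neg at hcon
      obtain ⟨I, hIsub, hIcard⟩ := Finset.exists_subset_card_eq (show t s + 1 ≤ Γ.card by omega)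
      have hmono : topologicalKrullDim ↥(⋂ i ∈ Γ, D i)
          ≤ topologicalKrullDim ↥(⋂ i ∈ I, D i) :=
        dim_mono_aux hclΓ (Set.biInter_subset_biInter_left (by exact_mod_cast hIsub))
      have hle := hpos s hs1 hsn I hIcard
      rw [hd] at hmono
      have h2 : (d : WithBot ℕ∞) + ((s : WithBot ℕ∞) + 1) ≤ (n : WithBot ℕ∞) :=
        le_trans (add_le_add_left hmono _) hle
      have h3 : ((d + s + 1 : ℕ) : WithBot ℕ∞) ≤ ((n : ℕ) : WithBot ℕ∞) := by
        push_cast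
        rw [add_assoc]
        exact h2
      have : d + s + 1 ≤ n := by exact_mod_cast h3
      omega
    -- conclude
    have hnd : (n : ℝ) - d = (s : ℝ) := by
      have : (s : ℝ) = (n : ℝ) - (d : ℝ) := by
        rw [hs]; push_cast [Nat.cast_sub hdn]; ring
      linarith
    rw [hnd]
    refine le_trans ?_ (Finset.le_sup' (fun k : ℕ => (t k : ℝ) / k)
      (Finset.mem_Icc.mpr ⟨hs1, hsn⟩))
    gcongr
end

section
/- If Cartier divisors D_1, ..., D_q in a projective variety X of dimension n are in ℓ-subgeneral position with index κ (ℓ ≥ n ≥ κ ≥ 1), then their distributive constant Δ satisfies Δ ≤ (ℓ - n + κ)/κ. -/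
lemma krull_mono_aux {X : Type*} [TopologicalSpace X] {S T : Set X} (hS : IsClosed S)
    (hST : S ⊆ T) : topologicalKrullDim S ≤ topologicalKrullDim T := by
  exact (Topology.IsEmbedding.inclusion hST).isInducing.topologicalKrullDim_le

/-- If Cartier divisors `D 1, …, D q` (recorded through
their supports, closed subsets of `X`) in a projective variety `X` of
dimension `n` are in `ℓ`-subgeneral position with index `κ`
(`ℓ ≥ n ≥ κ ≥ 1`), then their distributive constant
`Δ = max_{Γ ≠ ∅} #Γ / (n - dim (⋂_{j ∈ Γ} Supp (D j)))` (with `dim ∅ = -∞`)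
satisfies `Δ ≤ (ℓ - n + κ)/κ`; equivalently, every nonempty `Γ` whose
intersection is nonempty of dimension `d` satisfies
`#Γ/(n - d) ≤ (ℓ - n + κ)/κ`. -/
theorem stmt_10 (X : Type*) [TopologicalSpace X] [IrreducibleSpace X]
    (n ℓ κ q : ℕ) (hκ : 1 ≤ κ) (hκn : κ ≤ n) (hnℓ : n ≤ ℓ)
    (hX : topologicalKrullDim X = (n : WithBot ℕ∞))
    (D : Fin q → Set X) (hDcl : ∀ i, IsClosed (D i))
    (hsub : ∀ I : Finset (Fin q), I.card ≤ ℓ + 1 →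
      topologicalKrullDim ↥(⋂ i ∈ I, D i) + (I.card : WithBot ℕ∞)
        ≤ (ℓ : WithBot ℕ∞))
    (hind : ∀ I : Finset (Fin q), I.card ≤ κ →
      topologicalKrullDim ↥(⋂ i ∈ I, D i) + (I.card : WithBot ℕ∞)
        ≤ (n : WithBot ℕ∞)) :
    ∀ Γ : Finset (Fin q), Γ.Nonempty → ∀ d : ℕ,
      topologicalKrullDim ↥(⋂ i ∈ Γ, D i) = (d : WithBot ℕ∞) →
        (Γ.card : ℝ) / ((n : ℝ) - d) ≤ ((ℓ : ℝ) - n + κ) / κ := by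
  intro Γ hΓne d hΓ
  set c := Γ.card with hc
  have hc1 : 1 ≤ c := Finset.card_pos.mpr hΓne
  -- monotonicity of dimension over subsets of Γ
  have keyI : ∀ I : Finset (Fin q), I ⊆ Γ →
      (d : WithBot ℕ∞) ≤ topologicalKrullDim ↥(⋂ i ∈ I, D i) := by
    intro I hI
    rw [← hΓ]
    apply krull_mono_aux
    · exact isClosed_biInter fun i _ => hDcl i
    · intro x hx
      simp only [Set.mem_iInter] at hx ⊢
      exact fun i hi => hx i (hI hi)
  -- generic bound extraction
  have key : ∀ m : ℕ, m ≤ c →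
      (∀ N : ℕ, (∀ I : Finset (Fin q), I ⊆ Γ → I.card = m →
        topologicalKrullDim ↥(⋂ i ∈ I, D i) + (I.card : WithBot ℕ∞) ≤ (N : WithBot ℕ∞)) →
        d + m ≤ N) := by
    intro m hm N hN
    obtain ⟨I, hIΓ, hIc⟩ := Finset.exists_subset_card_eq hm
    have h2 : (d : WithBot ℕ∞) + (I.card : WithBot ℕ∞) ≤ (N : WithBot ℕ∞) :=
      le_trans (add_le_add (keyI I hIΓ) le_rfl) (hN I hIΓ hIc)
    rw [hIc] at h2
    exact_mod_cast h2
  have h1 : d + min c κ ≤ n := by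
    apply key (min c κ) (min_le_left _ _)
    intro I hIΓ hIc
    exact hind I (by rw [hIc]; exact min_le_right _ _)
  have h3 : d + min c (ℓ + 1) ≤ ℓ := by
    apply key (min c (ℓ + 1)) (min_le_left _ _)
    intro I hIΓ hIc
    exact hsub I (by rw [hIc]; exact min_le_right _ _)
  have hcl : d + c ≤ ℓ := by omega
  -- pass to reals
  have hnd : 0 < (n : ℝ) - d := by
    have : d + 1 ≤ n := by omega
    have : (d : ℝ) + 1 ≤ n := by exact_mod_cast this
    linarith
  have hκR : (0 : ℝ) < κ := by exact_mod_cast hκ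
  rw [div_le_div_iff₀ hnd hκR]
  have hclR : (d : ℝ) + c ≤ ℓ := by exact_mod_cast hcl
  have hnℓR : (n : ℝ) ≤ ℓ := by exact_mod_cast hnℓ
  rcases le_or_gt c κ with h | h
  · have hdc : d + c ≤ n := by omega
    have hdcR : (d : ℝ) + c ≤ n := by exact_mod_cast hdc
    have hcκR : (c : ℝ) ≤ κ := by exact_mod_cast h
    nlinarith
  · have hdκ : d + κ ≤ n := by omega
    have hdκR : (d : ℝ) + κ ≤ n := by exact_mod_cast hdκ
    nlinarith
end

section
/- Let π: X̃ → X be the blowing-up of a projective variety X along a closed subscheme Y, with exceptional divisor E. Then for every point P ∈ X̃ ∖ Supp E, λ_Y(π(P)) = λ_E(P) + O(1), where λ_Y is the Weil function of the closed subscheme Y and λ_E is a Weil function of the Cartier divisor E. -/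
set_option maxHeartbeats 1000000


/-- An effective Cartier divisor on a projective variety, recorded through
local data: its closed support and, for each point, an open neighbourhood
with a local defining function vanishing exactly on the support there. -/
structure CartierDivisor (X : Type*) [TopologicalSpace X] where
  supp : Set X
  supp_closed : IsClosed supp
  nbhd : X → Set X
  nbhd_open : ∀ x, IsOpen (nbhd x)
  mem_nbhd : ∀ x, x ∈ nbhd x
  fn : X → X → ℂ
  fn_ne : ∀ x, ∀ y ∈ nbhd x \ supp, fn x y ≠ 0
  fn_zero : ∀ x, ∀ y ∈ nbhd x ∩ supp, fn x y = 0

/-- `lam` is a Weil function for the Cartier divisor `D`. -/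
def IsWeilFunction {X : Type*} [TopologicalSpace X]
    (D : CartierDivisor X) (lam : X → ℝ) : Prop :=
  ∀ x : X, ∃ α : X → ℝ, ContinuousOn α (D.nbhd x) ∧
    ∀ y ∈ D.nbhd x \ D.supp,
      lam y = -Real.log ‖D.fn x y‖ + α y

/-- Silverman; Lemma 2.5.  Let `π : X̃ → X` be the
blowing-up of a projective variety `X` along a closed subscheme
`Y = D 1 ∩ … ∩ D m` (presented as an intersection of effective Cartier
divisors), and let `E` be the exceptional divisor, i.e. the invertible ideal
sheaf of `E` is the inverse image ideal sheaf `π⁻¹ I_Y · O_{X̃}`.  That the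
ideal of `E` equals the inverse image ideal of `Y` is recorded locally:
each pulled-back defining function `(D i).fn ∘ π` is divisible by the local
equation of `E` (hypothesis `hEdvd`), and the local equation of `E` lies in
the ideal generated by the pulled-back defining functions (hypothesis
`hEgen`); moreover `Supp E = π⁻¹ (Supp Y)`.  Then for all
`P ∈ X̃ ∖ Supp E` (off the supports) one has
`λ_Y (π P) = λ_E (P) + O(1)`, where `λ_Y = min_i λ_{D i}`. -/
theorem stmt_14 (X Xt : Type*) [TopologicalSpace X] [TopologicalSpace Xt]
    [CompactSpace X] [CompactSpace Xt]
    (π : Xt → X) (hπ : Continuous π)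
    (m : ℕ) (hm : 1 ≤ m)
    (D : Fin m → CartierDivisor X) (f : Fin m → X → ℝ)
    (hf : ∀ i, IsWeilFunction (D i) (f i))
    (E : CartierDivisor Xt) (lamE : Xt → ℝ)
    (hE : IsWeilFunction E lamE)
    (hsupp : E.supp = π ⁻¹' (⋂ i, (D i).supp))
    (hEdvd : ∀ (i : Fin m) (x : Xt), ∃ U : Set Xt, IsOpen U ∧ x ∈ U ∧
      ∃ c : Xt → ℂ, ContinuousOn c U ∧
        ∀ y ∈ U ∩ π ⁻¹' ((D i).nbhd (π x)) ∩ E.nbhd x,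
          (D i).fn (π x) (π y) = c y * E.fn x y)
    (hEgen : ∀ x : Xt, ∃ U : Set Xt, IsOpen U ∧ x ∈ U ∧
      ∃ c : Fin m → Xt → ℂ, (∀ i, ContinuousOn (c i) U) ∧
        ∀ y ∈ U ∩ (⋂ i, π ⁻¹' ((D i).nbhd (π x))) ∩ E.nbhd x,
          E.fn x y = ∑ i, c i y * (D i).fn (π x) (π y)) :
    ∃ C : ℝ, ∀ P : Xt, P ∉ E.supp → π P ∉ ⋃ i, (D i).supp →
      |(Finset.univ.inf' ⟨⟨0, hm⟩, Finset.mem_univ _⟩ fun i => f i (π P))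
        - lamE P| ≤ C := by
  classical
  have key : ∀ x : Xt, ∃ C : ℝ, ∀ᶠ y in nhds x,
      y ∉ E.supp → π y ∉ ⋃ i, (D i).supp →
      |(Finset.univ.inf' ⟨⟨0, hm⟩, Finset.mem_univ _⟩ fun i => f i (π y)) - lamE y| ≤ C := by
    intro x
    obtain ⟨α, hαc, hα⟩ := hE x
    choose β hβc hβ using fun i => hf i (π x)
    choose U hUo hUx c hcc hcd using fun i => hEdvd i x
    obtain ⟨V, hVo, hVx, d, hdc, hdg⟩ := hEgen x
    set A : ℝ := |α x| + 1 with hA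
    set B : ℝ := ∑ i, (|β i (π x)| + 1) with hB
    set M : ℝ := ∑ i, (‖c i x‖ + 1) with hM
    set S : ℝ := ∑ i, (‖d i x‖ + 1) with hS
    have hBi : ∀ i : Fin m, |β i (π x)| + 1 ≤ B := fun i =>
      Finset.single_le_sum (f := fun j => |β j (π x)| + 1) (fun j _ => by positivity)
        (Finset.mem_univ i)
    have hMi : ∀ i : Fin m, ‖c i x‖ + 1 ≤ M := fun i =>
      Finset.single_le_sum (f := fun j => ‖c j x‖ + 1) (fun j _ => by positivity)
        (Finset.mem_univ i)
    have hSi : ∀ i : Fin m, ‖d i x‖ + 1 ≤ S := fun i =>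
      Finset.single_le_sum (f := fun j => ‖d j x‖ + 1) (fun j _ => by positivity)
        (Finset.mem_univ i)
    have hM1 : (1 : ℝ) ≤ M :=
      le_trans (le_add_of_nonneg_left (norm_nonneg _)) (hMi ⟨0, hm⟩)
    have hS1 : (1 : ℝ) ≤ S :=
      le_trans (le_add_of_nonneg_left (norm_nonneg _)) (hSi ⟨0, hm⟩)
    have hB0 : (0 : ℝ) ≤ B := le_trans (by positivity) (hBi ⟨0, hm⟩)
    have hlogM : 0 ≤ Real.log M := Real.log_nonneg hM1
    have hlogS : 0 ≤ Real.log S := Real.log_nonneg hS1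
    refine ⟨Real.log M + Real.log S + B + A, ?_⟩
    have ev1 : ∀ᶠ y in nhds x, y ∈ E.nbhd x :=
      (E.nbhd_open x).eventually_mem (E.mem_nbhd x)
    have ev2 : ∀ᶠ y in nhds x, ∀ i, y ∈ U i :=
      Filter.eventually_all.mpr fun i => (hUo i).eventually_mem (hUx i)
    have ev3 : ∀ᶠ y in nhds x, y ∈ V := hVo.eventually_mem hVx
    have ev4 : ∀ᶠ y in nhds x, ∀ i, π y ∈ (D i).nbhd (π x) :=
      Filter.eventually_all.mpr fun i =>
        ((((D i).nbhd_open (π x)).preimage hπ).eventually_mem ((D i).mem_nbhd (π x)))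
    have hcaα : ContinuousAt α x :=
      hαc.continuousAt ((E.nbhd_open x).mem_nhds (E.mem_nbhd x))
    have ev5 : ∀ᶠ y in nhds x, |α y| < A :=
      (continuous_abs.continuousAt.comp hcaα).eventually_lt_const (lt_add_one _)
    have ev6 : ∀ᶠ y in nhds x, ∀ i, |β i (π y)| < |β i (π x)| + 1 :=
      Filter.eventually_all.mpr fun i => by
        have hcb : ContinuousAt (β i) (π x) :=
          (hβc i).continuousAt (((D i).nbhd_open (π x)).mem_nhds ((D i).mem_nbhd (π x)))
        exact (continuous_abs.continuousAt.comp (hcb.comp hπ.continuousAt)).eventually_lt_const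
          (lt_add_one _)
    have ev7 : ∀ᶠ y in nhds x, ∀ i, ‖c i y‖ < ‖c i x‖ + 1 :=
      Filter.eventually_all.mpr fun i => by
        have hcb : ContinuousAt (c i) x := (hcc i).continuousAt ((hUo i).mem_nhds (hUx i))
        exact (continuous_norm.continuousAt.comp hcb).eventually_lt_const (lt_add_one _)
    have ev8 : ∀ᶠ y in nhds x, ∀ i, ‖d i y‖ < ‖d i x‖ + 1 :=
      Filter.eventually_all.mpr fun i => by
        have hcb : ContinuousAt (d i) x := (hdc i).continuousAt (hVo.mem_nhds hVx)
        exact (continuous_norm.continuousAt.comp hcb).eventually_lt_const (lt_add_one _)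
    filter_upwards [ev1, ev2, ev3, ev4, ev5, ev6, ev7, ev8] with y hyE hyU hyV hyD hyα hyβ hyc hyd
    intro hEs hDs
    have hDnsupp : ∀ i, π y ∉ (D i).supp := fun i hmem => hDs (Set.mem_iUnion.mpr ⟨i, hmem⟩)
    have hEne : E.fn x y ≠ 0 := E.fn_ne x y ⟨hyE, hEs⟩
    have hDne : ∀ i, (D i).fn (π x) (π y) ≠ 0 := fun i => (D i).fn_ne _ _ ⟨hyD i, hDnsupp i⟩
    have hlamE : lamE y = -Real.log (‖E.fn x y‖) + α y := hα y ⟨hyE, hEs⟩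
    have hfi : ∀ i, f i (π y)
        = -Real.log (‖(D i).fn (π x) (π y)‖) + β i (π y) :=
      fun i => hβ i (π y) ⟨hyD i, hDnsupp i⟩
    have hdvd : ∀ i, (D i).fn (π x) (π y) = c i y * E.fn x y :=
      fun i => hcd i y ⟨⟨hyU i, hyD i⟩, hyE⟩
    have hcne : ∀ i, c i y ≠ 0 := fun i h => hDne i (by rw [hdvd i, h, zero_mul])
    have hgen : E.fn x y = ∑ i, d i y * (D i).fn (π x) (π y) :=
      hdg y ⟨⟨hyV, Set.mem_iInter.mpr fun i => hyD i⟩, hyE⟩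
    have heEpos : 0 < ‖E.fn x y‖ := norm_pos_iff.mpr hEne
    have hgpos : ∀ i, 0 < ‖(D i).fn (π x) (π y)‖ :=
      fun i => norm_pos_iff.mpr (hDne i)
    have hcpos : ∀ i, 0 < ‖c i y‖ := fun i => norm_pos_iff.mpr (hcne i)
    have hdiff : ∀ i, f i (π y) - lamE y
        = -Real.log (‖c i y‖) + β i (π y) - α y := by
      intro i
      have hlog : Real.log (‖(D i).fn (π x) (π y)‖)
          = Real.log (‖c i y‖) + Real.log (‖E.fn x y‖) := by
        rw [hdvd i, norm_mul, Real.log_mul (ne_of_gt (hcpos i)) (ne_of_gt heEpos)]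
      rw [hfi i, hlamE, hlog]; ring
    -- lower bound
    have hlow : lamE y - (Real.log M + Real.log S + B + A)
        ≤ Finset.univ.inf' ⟨⟨0, hm⟩, Finset.mem_univ _⟩ fun i => f i (π y) := by
      refine Finset.le_inf' _ _ fun i _ => ?_
      have h1 : Real.log (‖c i y‖) ≤ Real.log M :=
        Real.log_le_log (hcpos i) (le_trans (hyc i).le (hMi i))
      have h2 := (abs_lt.mp (hyβ i)).1
      have h3 := (abs_lt.mp hyα).2
      have := hdiff i
      have := hBi i
      linarith
    -- upper bound
    obtain ⟨j, -, hj⟩ := Finset.univ.exists_max_image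
      (fun i => ‖(D i).fn (π x) (π y)‖) ⟨⟨0, hm⟩, Finset.mem_univ _⟩
    have hSpos : (0 : ℝ) < S := lt_of_lt_of_le one_pos hS1
    have hEbound : ‖E.fn x y‖ ≤ S * ‖(D j).fn (π x) (π y)‖ := by
      calc ‖E.fn x y‖
          = ‖∑ i, d i y * (D i).fn (π x) (π y)‖ := by rw [hgen]
        _ ≤ ∑ i, ‖d i y * (D i).fn (π x) (π y)‖ := norm_sum_le _ _
        _ = ∑ i, ‖d i y‖ * ‖(D i).fn (π x) (π y)‖ := by
            simp [map_mul]
        _ ≤ ∑ i, (‖d i x‖ + 1) * ‖(D j).fn (π x) (π y)‖ := by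
            refine Finset.sum_le_sum fun i _ => mul_le_mul (hyd i).le
              (hj i (Finset.mem_univ i)) (norm_nonneg _) (by positivity)
        _ = S * ‖(D j).fn (π x) (π y)‖ := by rw [← Finset.sum_mul]
    have hgj : ‖E.fn x y‖ / S ≤ ‖(D j).fn (π x) (π y)‖ :=
      (div_le_iff₀ hSpos).mpr (by rw [mul_comm]; exact hEbound)
    have hlogj : Real.log (‖E.fn x y‖) - Real.log S
        ≤ Real.log (‖(D j).fn (π x) (π y)‖) := by
      have := Real.log_le_log (div_pos heEpos hSpos) hgj
      rwa [Real.log_div (ne_of_gt heEpos) (ne_of_gt hSpos)] at this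
    have hub : (Finset.univ.inf' ⟨⟨0, hm⟩, Finset.mem_univ _⟩ fun i => f i (π y))
        ≤ lamE y + (Real.log M + Real.log S + B + A) := by
      have h0 : (Finset.univ.inf' ⟨⟨0, hm⟩, Finset.mem_univ _⟩ fun i => f i (π y))
          ≤ f j (π y) := Finset.inf'_le _ (Finset.mem_univ j)
      have h2 := (abs_lt.mp (hyβ j)).2
      have h3 := (abs_lt.mp hyα).1
      have h4 := hBi j
      have h5 := hfi j
      linarith [hlamE]
    rw [abs_le]
    constructor <;> linarith
  choose C hC using key
  choose Uu hU using fun x => eventually_nhds_iff.mp (hC x)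
  obtain ⟨t, ht⟩ := IsCompact.elim_nhds_subcover isCompact_univ Uu
    (fun x _ => (hU x).2.1.mem_nhds (hU x).2.2)
  refine ⟨∑ x ∈ t, |C x|, fun P hP1 hP2 => ?_⟩
  obtain ⟨x, hxt, hPx⟩ : ∃ x ∈ t, P ∈ Uu x := by
    have := ht.2 (Set.mem_univ P)
    simpa [Set.mem_iUnion] using this
  calc |(Finset.univ.inf' ⟨⟨0, hm⟩, Finset.mem_univ _⟩ fun i => f i (π P)) - lamE P|
      ≤ C x := (hU x).1 P hPx hP1 hP2
    _ ≤ |C x| := le_abs_self _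
    _ ≤ ∑ x ∈ t, |C x| := Finset.single_le_sum (f := fun z => |C z|) (fun _ _ => abs_nonneg _) hxt
end
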